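/- arXiv:1202.2063 — 2 statements merged into one kernel-verified Lean document; each statement's English description precedes it below -/
import Mathlib

section
/- Let (X,d,μ) be a space of homogeneous type whose measure satisfies μ(B(x,λr)) ≤ C λ^n μ(B(x,r)) for all λ ≥ 1. Suppose that for each t > 0, p_t : X × X → ℂ is a measurable kernel satisfying the Gaussian upper bound |p_t(x,y)| ≤ C μ(B(x,√t))^{-1} exp(−d(x,y)²/(ct)) for almost every x,y ∈ X, with constants C, c > 0 independent of t. Then there exist constants C', c' > 0 such that for every t > 0, all open subsets U₁, U₂ ⊂ X, and all f₁, f₂ ∈ L²(X,μ) with supp f_i ⊂ U_i (i=1,2), one has ∫_X ∫_X |p_t(x,y)| |f₁(y)| |f₂(x)| dμ(y) dμ(x) ≤ C' exp(−dist(U₁,U₂)²/(c't)) ‖f₁‖_{L²(μ)} ‖f₂‖_{L²(μ)}, where dist(U₁,U₂) := inf{d(x,y) : x ∈ U₁, y ∈ U₂}. In other words, a Gaussian heat kernel upper bound implies the Davies–Gaffney estimate. -/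
open MeasureTheory Metric Set ENNReal


private lemma aux_summable {n c : ℝ} (hn : 0 < n) (hc : 0 < c) :
    Summable (fun j : ℕ => ((j:ℝ)+2)^n * (((j:ℝ)+2)^n * Real.exp (-(j:ℝ)^2/(2*c)))) := by
  set m := ⌈n⌉₊ with hm
  have hr : (0:ℝ) < 1/(2*c) := by positivity
  have hF : Summable (fun j : ℕ =>
      ((j:ℝ)^(2*m) * Real.exp (-(1/(2*c)) * j)) * Real.exp (2*(1/(2*c)))) :=
    (Real.summable_pow_mul_exp_neg_nat_mul (2*m) hr).mul_right _
  have hF2 : Summable (fun j : ℕ =>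
      (((j+2:ℕ):ℝ)^(2*m) * Real.exp (-(1/(2*c)) * ((j:ℕ)+2:ℕ))) * Real.exp (2*(1/(2*c)))) :=
    (summable_nat_add_iff 2).2 hF
  apply Summable.of_nonneg_of_le (fun j => by positivity) (fun j => ?_) hF2
  have h1 : (1:ℝ) ≤ (j:ℝ)+2 := by
    have : (0:ℝ) ≤ (j:ℝ) := Nat.cast_nonneg j
    linarith
  have hpow : ((j:ℝ)+2)^n ≤ ((j:ℝ)+2)^m := by
    rw [← Real.rpow_natCast ((j:ℝ)+2) m]
    exact Real.rpow_le_rpow_of_exponent_le h1 (Nat.le_ceil n)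
  have hexp : Real.exp (-(j:ℝ)^2/(2*c)) ≤ Real.exp (-(1/(2*c)) * j) := by
    apply Real.exp_le_exp.2
    have : (j:ℝ) ≤ (j:ℝ)^2 := by
      have := Nat.le_self_pow two_ne_zero j
      exact_mod_cast this
    rw [neg_div, neg_mul, neg_le_neg_iff, one_div, inv_mul_eq_div]
    gcongr
  calc ((j:ℝ)+2)^n * (((j:ℝ)+2)^n * Real.exp (-(j:ℝ)^2/(2*c)))
      ≤ ((j:ℝ)+2)^m * (((j:ℝ)+2)^m * Real.exp (-(1/(2*c)) * j)) := by
        apply mul_le_mul hpow (mul_le_mul hpow hexp (Real.exp_nonneg _) (by positivity))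
          (by positivity) (by positivity)
    _ = (((j+2:ℕ):ℝ)^(2*m) * Real.exp (-(1/(2*c)) * ((j:ℕ)+2:ℕ))) * Real.exp (2*(1/(2*c))) := by
        have harg : -(1/(2*c))*((j:ℝ)+2) + 2*(1/(2*c)) = -(1/(2*c))*(j:ℝ) := by ring
        have h2 : ((j:ℝ)+2)^(2*m) = ((j:ℝ)+2)^m * ((j:ℝ)+2)^m := by rw [two_mul, pow_add]
        have h3 : ((j+2:ℕ):ℝ) = (j:ℝ)+2 := by push_cast; ring
        rw [h3, h2, mul_assoc, ← Real.exp_add, harg, mul_assoc]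

private lemma aux_separable {X : Type*} [MetricSpace X] [MeasurableSpace X] [BorelSpace X]
    (μ : Measure X)
    (hpos : ∀ (x : X) (r : ℝ), 0 < r → 0 < μ (ball x r))
    (hfin : ∀ (x : X) (r : ℝ), 0 < r → μ (ball x r) < ⊤)
    {Cv : ℝ≥0∞} (hCv : Cv < ⊤) {n : ℝ} (hn : 0 < n)
    (hgrowth : ∀ (x : X) (r l : ℝ), 0 < r → 1 ≤ l →
      μ (ball x (l * r)) ≤ Cv * ENNReal.ofReal l ^ n * μ (ball x r)) :
    TopologicalSpace.SeparableSpace X := by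
  rcases isEmpty_or_nonempty X with h|h
  · infer_instance
  obtain ⟨x₀⟩ := h
  have hCv1 : (1:ℝ≥0∞) ≤ Cv := by
    have hb0 := hpos x₀ 1 one_pos
    have hbt := hfin x₀ 1 one_pos
    have h := hgrowth x₀ 1 1 one_pos le_rfl
    simp only [one_mul, ENNReal.ofReal_one, ENNReal.one_rpow, mul_one] at h
    have h5 := mul_le_mul_left h (μ (ball x₀ 1))⁻¹
    rwa [ENNReal.mul_inv_cancel hb0.ne' hbt.ne, mul_assoc,
      ENNReal.mul_inv_cancel hb0.ne' hbt.ne, mul_one] at h5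
  have htb : ∀ R : ℝ, 0 < R → TotallyBounded (ball x₀ R) := by
    intro R hR
    rw [Metric.totallyBounded_iff]
    by_contra hTB
    push_neg at hTB
    obtain ⟨ε, hε, hno⟩ := hTB
    have hstep : ∀ s : Finset X, (∀ x ∈ s, x ∈ ball x₀ R) →
        ∃ y, y ∈ ball x₀ R ∧ ∀ x ∈ s, ε ≤ dist x y := by
      intro s _
      obtain ⟨y, hy, hy2⟩ := not_subset.1 (hno (↑s) s.finite_toSet)
      refine ⟨y, hy, fun x hx => ?_⟩
      by_contra hlt
      push_neg at hlt
      exact hy2 (mem_iUnion₂.2 ⟨x, Finset.mem_coe.2 hx, by rw [mem_ball, dist_comm]; exact hlt⟩)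
    haveI : Std.Symm (fun x y : X => ε ≤ dist x y) := ⟨fun x y h => by rwa [dist_comm]⟩
    obtain ⟨u, hu, hsep⟩ := exists_seq_of_forall_finset_exists'
      (fun z => z ∈ ball x₀ R) (fun x y => ε ≤ dist x y) hstep
    have hdisj : Pairwise (Function.onFun Disjoint fun i => ball (u i) (ε/2)) := by
      intro i j hij
      exact ball_disjoint_ball (by have := hsep hij; simp only [Function.onFun] at this; linarith)
    have hcov : (⋃ i, ball (u i) (ε/2)) ⊆ ball x₀ (R + ε) := by
      refine iUnion_subset fun i z hz => ?_
      have h1 := mem_ball.1 hz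
      have h2 := mem_ball.1 (hu i)
      rw [mem_ball]
      calc dist z x₀ ≤ dist z (u i) + dist (u i) x₀ := dist_triangle _ _ _
        _ < R + ε := by linarith
    set l : ℝ := max 1 ((2*(2*R+ε))/ε) with hl
    have hl1 : (1:ℝ) ≤ l := le_max_left _ _
    have hDne : (Cv * ENNReal.ofReal l ^ n) ≠ 0 := by
      apply mul_ne_zero (by intro h0; rw [h0] at hCv1; simp at hCv1)
      exact (ENNReal.rpow_pos (lt_of_lt_of_le zero_lt_one (by simpa using ENNReal.ofReal_le_ofReal hl1)) ENNReal.ofReal_ne_top).ne'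
    have hDtop : (Cv * ENNReal.ofReal l ^ n) ≠ ⊤ :=
      ENNReal.mul_ne_top hCv.ne (ENNReal.rpow_ne_top_of_nonneg hn.le ENNReal.ofReal_ne_top)
    set δ := μ (ball x₀ (R + ε)) * (Cv * ENNReal.ofReal l ^ n)⁻¹ with hδ
    have hδpos : δ ≠ 0 :=
      mul_ne_zero (hpos x₀ (R+ε) (by positivity)).ne' (ENNReal.inv_ne_zero.2 hDtop)
    have hlow : ∀ i, δ ≤ μ (ball (u i) (ε/2)) := by
      intro i
      have h2 := mem_ball.1 (hu i)
      have hsub2 : ball x₀ (R+ε) ⊆ ball (u i) (l * (ε/2)) := by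
        intro z hz
        rw [mem_ball]
        have h3 : dist z (u i) ≤ dist z x₀ + dist x₀ (u i) := dist_triangle _ _ _
        rw [dist_comm x₀ (u i)] at h3
        have hle : (2*(2*R+ε))/ε ≤ l := le_max_right _ _
        have h4 : 2*R+ε ≤ l * (ε/2) := by
          calc 2*R+ε = ((2*(2*R+ε))/ε) * (ε/2) := by field_simp
            _ ≤ l * (ε/2) := mul_le_mul_of_nonneg_right hle (by positivity)
        have h5 := mem_ball.1 hz
        calc dist z (u i) ≤ dist z x₀ + dist (u i) x₀ := h3
          _ < (R+ε) + R := by linarith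
          _ ≤ l * (ε/2) := by linarith
      have h3 := hgrowth (u i) (ε/2) l (by positivity) hl1
      have h4 : μ (ball x₀ (R+ε)) ≤ (Cv * ENNReal.ofReal l ^ n) * μ (ball (u i) (ε/2)) :=
        (measure_mono hsub2).trans h3
      calc δ = μ (ball x₀ (R+ε)) * (Cv * ENNReal.ofReal l ^ n)⁻¹ := rfl
        _ ≤ ((Cv * ENNReal.ofReal l ^ n) * μ (ball (u i) (ε/2))) * (Cv * ENNReal.ofReal l ^ n)⁻¹ :=
            mul_le_mul_left h4 _
        _ = μ (ball (u i) (ε/2)) := by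
            rw [mul_comm (Cv * ENNReal.ofReal l ^ n) _, mul_assoc,
              ENNReal.mul_inv_cancel hDne hDtop, mul_one]
    have hsum : μ (⋃ i, ball (u i) (ε/2)) = ∑' i, μ (ball (u i) (ε/2)) :=
      measure_iUnion hdisj fun i => measurableSet_ball
    have htop : (⊤:ℝ≥0∞) ≤ μ (⋃ i, ball (u i) (ε/2)) := by
      rw [hsum]
      calc (⊤:ℝ≥0∞) = ∑' _ : ℕ, δ := (ENNReal.tsum_const_eq_top_of_ne_zero hδpos).symm
        _ ≤ _ := ENNReal.tsum_le_tsum hlow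
    exact absurd (top_le_iff.1 (htop.trans (measure_mono hcov)))
      (hfin x₀ (R+ε) (by positivity)).ne
  have hsepu : TopologicalSpace.IsSeparable (univ : Set X) := by
    have huniv : (univ : Set X) = ⋃ k : ℕ, ball x₀ ((k:ℝ)+1) := by
      apply Subset.antisymm
      · intro z _
        exact mem_iUnion.2 ⟨⌊dist z x₀⌋₊, mem_ball.2 (Nat.lt_floor_add_one _)⟩
      · exact subset_univ _
    rw [huniv]
    exact TopologicalSpace.IsSeparable.iUnion fun k => (htb ((k:ℝ)+1) (by positivity)).isSeparable
  exact TopologicalSpace.isSeparable_univ_iff.1 hsepu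

private lemma aux_cover {X : Type*} [MetricSpace X] {s : ℝ} (hs0 : 0 < s) (x : X) :
    (Set.univ : Set X) = ⋃ j : ℕ, {y | dist x y ∈ Set.Ico ((j:ℝ)*s) (((j:ℝ)+1)*s)} := by
  apply Subset.antisymm _ (subset_univ _)
  intro y _
  refine mem_iUnion.2 ⟨⌊dist x y / s⌋₊, ?_, ?_⟩
  · have h0 : 0 ≤ dist x y / s := by positivity
    calc (⌊dist x y / s⌋₊:ℝ) * s ≤ (dist x y / s) * s :=
        mul_le_mul_of_nonneg_right (Nat.floor_le h0) hs0.le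
      _ = dist x y := div_mul_cancel₀ _ hs0.ne'
  · calc dist x y = (dist x y / s) * s := (div_mul_cancel₀ _ hs0.ne').symm
      _ < ((⌊dist x y / s⌋₊:ℝ)+1) * s :=
        mul_lt_mul_of_pos_right (Nat.lt_floor_add_one _) hs0

private lemma aux_exp_annulus {c t s dxy : ℝ} (hc : 0 < c) (ht : 0 < t)
    (hst : s^2 = t) (j : ℕ) (hd : (j:ℝ)*s ≤ dxy) (hs0 : 0 < s) :
    Real.exp (-dxy^2/(2*c*t)) ≤ Real.exp (-(j:ℝ)^2/(2*c)) := by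
  apply Real.exp_le_exp.2
  have h1 : ((j:ℝ)*s)^2 ≤ dxy^2 := by
    have hj0 : (0:ℝ) ≤ (j:ℝ)*s := by positivity
    exact pow_le_pow_left₀ hj0 hd 2
  have h2 : ((j:ℝ)*s)^2 = (j:ℝ)^2 * t := by rw [mul_pow, hst]
  rw [neg_div, neg_div, neg_le_neg_iff]
  have h3 : (j:ℝ)^2/(2*c) = (j:ℝ)^2*t/(2*c*t) := by
    field_simp
  rw [h3]
  gcongr
  rw [← h2]; exact h1

private lemma schurA {X : Type*} [MetricSpace X] [MeasurableSpace X] [BorelSpace X]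
    (μ : Measure X)
    (hpos : ∀ (x : X) (r : ℝ), 0 < r → 0 < μ (ball x r))
    (hfin : ∀ (x : X) (r : ℝ), 0 < r → μ (ball x r) < ⊤)
    {Cr n : ℝ} (hC1 : 1 ≤ Cr) (hn : 0 < n)
    (hg : ∀ (x : X) (r l : ℝ), 0 < r → 1 ≤ l →
      μ (ball x (l * r)) ≤ ENNReal.ofReal (Cr * l ^ n) * μ (ball x r))
    {c t : ℝ} (hc : 0 < c) (ht : 0 < t) (x : X) :
    ∫⁻ y, (μ (ball x (Real.sqrt t)))⁻¹ *
        ENNReal.ofReal (Real.exp (-(dist x y)^2/(2*c*t))) ∂μ ≤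
      ∑' j : ℕ, ENNReal.ofReal (Cr^2 * (((j:ℝ)+2)^n * (((j:ℝ)+2)^n *
        Real.exp (-(j:ℝ)^2/(2*c))))) := by
  set s := Real.sqrt t with hs
  have hs0 : 0 < s := Real.sqrt_pos.2 ht
  have hst : s^2 = t := Real.sq_sqrt ht.le
  have hb0 := hpos x s hs0
  have hbt := hfin x s hs0
  calc ∫⁻ y, (μ (ball x s))⁻¹ * ENNReal.ofReal (Real.exp (-(dist x y)^2/(2*c*t))) ∂μ
      = ∫⁻ y in ⋃ j : ℕ, {y | dist x y ∈ Set.Ico ((j:ℝ)*s) (((j:ℝ)+1)*s)},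
          (μ (ball x s))⁻¹ * ENNReal.ofReal (Real.exp (-(dist x y)^2/(2*c*t))) ∂μ := by
        rw [← aux_cover hs0 x, Measure.restrict_univ]
    _ ≤ ∑' j : ℕ, ∫⁻ y in {y | dist x y ∈ Set.Ico ((j:ℝ)*s) (((j:ℝ)+1)*s)},
          (μ (ball x s))⁻¹ * ENNReal.ofReal (Real.exp (-(dist x y)^2/(2*c*t))) ∂μ :=
        lintegral_iUnion_le _ _
    _ ≤ _ := by
        apply ENNReal.tsum_le_tsum
        intro j
        have hsub : {y | dist x y ∈ Set.Ico ((j:ℝ)*s) (((j:ℝ)+1)*s)} ⊆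
            ball x (((j:ℝ)+1)*s) := by
          intro y hy
          rw [mem_ball, dist_comm]
          exact hy.2
        calc ∫⁻ y in {y | dist x y ∈ Set.Ico ((j:ℝ)*s) (((j:ℝ)+1)*s)},
              (μ (ball x s))⁻¹ * ENNReal.ofReal (Real.exp (-(dist x y)^2/(2*c*t))) ∂μ
            ≤ ∫⁻ _ in {y | dist x y ∈ Set.Ico ((j:ℝ)*s) (((j:ℝ)+1)*s)},
              (μ (ball x s))⁻¹ * ENNReal.ofReal (Real.exp (-(j:ℝ)^2/(2*c))) ∂μ := by
              apply setLIntegral_mono measurable_const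
              intro y hy
              exact mul_le_mul_right (ENNReal.ofReal_le_ofReal
                (aux_exp_annulus hc ht hst j hy.1 hs0)) _
          _ = ((μ (ball x s))⁻¹ * ENNReal.ofReal (Real.exp (-(j:ℝ)^2/(2*c)))) *
              μ {y | dist x y ∈ Set.Ico ((j:ℝ)*s) (((j:ℝ)+1)*s)} := setLIntegral_const _ _
          _ ≤ ((μ (ball x s))⁻¹ * ENNReal.ofReal (Real.exp (-(j:ℝ)^2/(2*c)))) *
              (ENNReal.ofReal (Cr * ((j:ℝ)+1)^n) * μ (ball x s)) := by
              apply mul_le_mul_right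
              exact (measure_mono hsub).trans (hg x s ((j:ℝ)+1) hs0 (by
                have : (0:ℝ) ≤ (j:ℝ) := Nat.cast_nonneg j; linarith))
          _ = ENNReal.ofReal (Real.exp (-(j:ℝ)^2/(2*c))) * ENNReal.ofReal (Cr * ((j:ℝ)+1)^n) *
              ((μ (ball x s))⁻¹ * μ (ball x s)) := by ring
          _ = ENNReal.ofReal (Real.exp (-(j:ℝ)^2/(2*c)) * (Cr * ((j:ℝ)+1)^n)) := by
              rw [ENNReal.inv_mul_cancel hb0.ne' hbt.ne, mul_one,
                ← ENNReal.ofReal_mul (Real.exp_nonneg _)]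
          _ ≤ ENNReal.ofReal (Cr^2 * (((j:ℝ)+2)^n * (((j:ℝ)+2)^n *
              Real.exp (-(j:ℝ)^2/(2*c))))) := by
              apply ENNReal.ofReal_le_ofReal
              have hj0 : (0:ℝ) ≤ (j:ℝ) := Nat.cast_nonneg j
              have hp1 : ((j:ℝ)+1)^n ≤ ((j:ℝ)+2)^n :=
                Real.rpow_le_rpow (by linarith) (by linarith) hn.le
              have hp2 : (1:ℝ) ≤ ((j:ℝ)+2)^n := Real.one_le_rpow (by linarith) hn.le
              have hCr2 : Cr ≤ Cr^2 := by nlinarith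
              have he := Real.exp_nonneg (-(j:ℝ)^2/(2*c))
              have hp1' : (0:ℝ) ≤ ((j:ℝ)+1)^n := Real.rpow_nonneg (by linarith) n
              have h6 : ((j:ℝ)+1)^n ≤ ((j:ℝ)+2)^n * ((j:ℝ)+2)^n :=
                hp1.trans (le_mul_of_one_le_left (Real.rpow_nonneg (by linarith) n) hp2)
              calc Real.exp (-(j:ℝ)^2/(2*c)) * (Cr * ((j:ℝ)+1)^n)
                  ≤ Real.exp (-(j:ℝ)^2/(2*c)) * (Cr^2 * (((j:ℝ)+2)^n * ((j:ℝ)+2)^n)) := by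
                    apply mul_le_mul_of_nonneg_left _ he
                    exact mul_le_mul hCr2 h6 hp1' (by positivity)
                _ = Cr^2 * (((j:ℝ)+2)^n * (((j:ℝ)+2)^n * Real.exp (-(j:ℝ)^2/(2*c)))) := by ring

private lemma schurB {X : Type*} [MetricSpace X] [MeasurableSpace X] [BorelSpace X]
    (μ : Measure X)
    (hpos : ∀ (x : X) (r : ℝ), 0 < r → 0 < μ (ball x r))
    (hfin : ∀ (x : X) (r : ℝ), 0 < r → μ (ball x r) < ⊤)
    {Cr n : ℝ} (hC1 : 1 ≤ Cr) (hn : 0 < n)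
    (hg : ∀ (x : X) (r l : ℝ), 0 < r → 1 ≤ l →
      μ (ball x (l * r)) ≤ ENNReal.ofReal (Cr * l ^ n) * μ (ball x r))
    {c t : ℝ} (hc : 0 < c) (ht : 0 < t) (y : X) :
    ∫⁻ x, (μ (ball x (Real.sqrt t)))⁻¹ *
        ENNReal.ofReal (Real.exp (-(dist x y)^2/(2*c*t))) ∂μ ≤
      ∑' j : ℕ, ENNReal.ofReal (Cr^2 * (((j:ℝ)+2)^n * (((j:ℝ)+2)^n *
        Real.exp (-(j:ℝ)^2/(2*c))))) := by
  set s := Real.sqrt t with hs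
  have hs0 : 0 < s := Real.sqrt_pos.2 ht
  have hst : s^2 = t := Real.sq_sqrt ht.le
  have ha0 := hpos y s hs0
  have hat := hfin y s hs0
  have hcomm : ∀ x : X, dist x y = dist y x := fun x => dist_comm x y
  simp only [hcomm]
  calc ∫⁻ x, (μ (ball x s))⁻¹ * ENNReal.ofReal (Real.exp (-(dist y x)^2/(2*c*t))) ∂μ
      = ∫⁻ x in ⋃ j : ℕ, {z | dist y z ∈ Set.Ico ((j:ℝ)*s) (((j:ℝ)+1)*s)},
          (μ (ball x s))⁻¹ * ENNReal.ofReal (Real.exp (-(dist y x)^2/(2*c*t))) ∂μ := by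
        rw [← aux_cover hs0 y, Measure.restrict_univ]
    _ ≤ ∑' j : ℕ, ∫⁻ x in {z | dist y z ∈ Set.Ico ((j:ℝ)*s) (((j:ℝ)+1)*s)},
          (μ (ball x s))⁻¹ * ENNReal.ofReal (Real.exp (-(dist y x)^2/(2*c*t))) ∂μ :=
        lintegral_iUnion_le _ _
    _ ≤ _ := by
        apply ENNReal.tsum_le_tsum
        intro j
        have hj0 : (0:ℝ) ≤ (j:ℝ) := Nat.cast_nonneg j
        set K := ENNReal.ofReal (Cr * ((j:ℝ)+2)^n) with hK
        have hK0 : K ≠ 0 := by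
          rw [hK]
          exact (ENNReal.ofReal_pos.2 (by positivity)).ne'
        have hKt : K ≠ ⊤ := ENNReal.ofReal_ne_top
        have hsub : {z | dist y z ∈ Set.Ico ((j:ℝ)*s) (((j:ℝ)+1)*s)} ⊆
            ball y (((j:ℝ)+1)*s) := by
          intro z hz
          rw [mem_ball, dist_comm]
          exact hz.2
        -- pointwise bound on the annulus
        have hptw : ∀ x ∈ {z | dist y z ∈ Set.Ico ((j:ℝ)*s) (((j:ℝ)+1)*s)},
            (μ (ball x s))⁻¹ * ENNReal.ofReal (Real.exp (-(dist y x)^2/(2*c*t))) ≤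
            (K * (μ (ball y s))⁻¹) * ENNReal.ofReal (Real.exp (-(j:ℝ)^2/(2*c))) := by
          intro x hx
          have hb0 := hpos x s hs0
          have hbt := hfin x s hs0
          have hball : ball y s ⊆ ball x (((j:ℝ)+2)*s) := by
            intro z hz
            rw [mem_ball]
            have h1 := mem_ball.1 hz
            have h2 : dist y x < ((j:ℝ)+1)*s := hx.2
            calc dist z x ≤ dist z y + dist y x := dist_triangle _ _ _
              _ < s + ((j:ℝ)+1)*s := by linarith
              _ = ((j:ℝ)+2)*s := by ring
          have ha : μ (ball y s) ≤ K * μ (ball x s) :=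
            (measure_mono hball).trans (hg x s ((j:ℝ)+2) hs0 (by linarith))
          have hinv : (μ (ball x s))⁻¹ ≤ K * (μ (ball y s))⁻¹ := by
            calc (μ (ball x s))⁻¹
                = ((μ (ball x s))⁻¹ * μ (ball y s)) * (μ (ball y s))⁻¹ := by
                  rw [mul_assoc, ENNReal.mul_inv_cancel ha0.ne' hat.ne, mul_one]
              _ ≤ ((μ (ball x s))⁻¹ * (K * μ (ball x s))) * (μ (ball y s))⁻¹ :=
                  mul_le_mul_left (mul_le_mul_right ha _) _
              _ = K * ((μ (ball x s))⁻¹ * μ (ball x s)) * (μ (ball y s))⁻¹ := by ring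
              _ = K * (μ (ball y s))⁻¹ := by
                  rw [ENNReal.inv_mul_cancel hb0.ne' hbt.ne, mul_one]
          exact mul_le_mul' hinv (ENNReal.ofReal_le_ofReal
            (aux_exp_annulus hc ht hst j hx.1 hs0))
        calc ∫⁻ x in {z | dist y z ∈ Set.Ico ((j:ℝ)*s) (((j:ℝ)+1)*s)},
              (μ (ball x s))⁻¹ * ENNReal.ofReal (Real.exp (-(dist y x)^2/(2*c*t))) ∂μ
            ≤ ∫⁻ _ in {z | dist y z ∈ Set.Ico ((j:ℝ)*s) (((j:ℝ)+1)*s)},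
              (K * (μ (ball y s))⁻¹) * ENNReal.ofReal (Real.exp (-(j:ℝ)^2/(2*c))) ∂μ :=
              setLIntegral_mono measurable_const hptw
          _ = ((K * (μ (ball y s))⁻¹) * ENNReal.ofReal (Real.exp (-(j:ℝ)^2/(2*c)))) *
              μ {z | dist y z ∈ Set.Ico ((j:ℝ)*s) (((j:ℝ)+1)*s)} := setLIntegral_const _ _
          _ ≤ ((K * (μ (ball y s))⁻¹) * ENNReal.ofReal (Real.exp (-(j:ℝ)^2/(2*c)))) *
              (ENNReal.ofReal (Cr * ((j:ℝ)+1)^n) * μ (ball y s)) := by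
              apply mul_le_mul_right
              exact (measure_mono hsub).trans (hg y s ((j:ℝ)+1) hs0 (by linarith))
          _ = K * ENNReal.ofReal (Real.exp (-(j:ℝ)^2/(2*c))) * ENNReal.ofReal (Cr * ((j:ℝ)+1)^n) *
              ((μ (ball y s))⁻¹ * μ (ball y s)) := by ring
          _ = ENNReal.ofReal ((Cr * ((j:ℝ)+2)^n) * Real.exp (-(j:ℝ)^2/(2*c)) *
              (Cr * ((j:ℝ)+1)^n)) := by
              rw [ENNReal.inv_mul_cancel ha0.ne' hat.ne, mul_one, hK,
                ← ENNReal.ofReal_mul (by positivity),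
                ← ENNReal.ofReal_mul (by positivity)]
          _ ≤ ENNReal.ofReal (Cr^2 * (((j:ℝ)+2)^n * (((j:ℝ)+2)^n *
              Real.exp (-(j:ℝ)^2/(2*c))))) := by
              apply ENNReal.ofReal_le_ofReal
              have hp1 : ((j:ℝ)+1)^n ≤ ((j:ℝ)+2)^n :=
                Real.rpow_le_rpow (by linarith) (by linarith) hn.le
              have hp2' : (0:ℝ) ≤ ((j:ℝ)+2)^n := Real.rpow_nonneg (by linarith) n
              have hp1' : (0:ℝ) ≤ ((j:ℝ)+1)^n := Real.rpow_nonneg (by linarith) n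
              have he := Real.exp_nonneg (-(j:ℝ)^2/(2*c))
              calc Cr * ((j:ℝ)+2)^n * Real.exp (-(j:ℝ)^2/(2*c)) * (Cr * ((j:ℝ)+1)^n)
                  ≤ Cr * ((j:ℝ)+2)^n * Real.exp (-(j:ℝ)^2/(2*c)) * (Cr * ((j:ℝ)+2)^n) := by
                    apply mul_le_mul_of_nonneg_left (mul_le_mul_of_nonneg_left hp1 (by linarith))
                    positivity
                _ = Cr^2 * (((j:ℝ)+2)^n * (((j:ℝ)+2)^n * Real.exp (-(j:ℝ)^2/(2*c)))) := by ring

/-- The distance between two subsets of a metric space,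
`dist(U₁,U₂) = inf { d(x,y) : x ∈ U₁, y ∈ U₂ }`. -/
noncomputable def setDist {X : Type*} [MetricSpace X] (U₁ U₂ : Set X) : ℝ :=
  sInf (Set.image2 dist U₁ U₂)

/-- on a space of homogeneous type, a Gaussian heat kernel upper bound
implies the Davies–Gaffney estimate: if for each `t > 0` the kernel `p_t` satisfies
`|p_t(x,y)| ≤ C V(x,√t)⁻¹ exp(-d(x,y)²/(ct))`, then there are `C', c' > 0` such that for
all `t > 0`, open `U₁, U₂ ⊆ X` and `f₁, f₂ ∈ L²` supported in `U₁, U₂` respectively,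
`∫∫ |p_t(x,y)||f₁(y)||f₂(x)| dμ(y)dμ(x)
  ≤ C' exp(-dist(U₁,U₂)²/(c't)) ‖f₁‖_{L²} ‖f₂‖_{L²}`. -/
theorem statement9
    {X : Type*} [MetricSpace X] [MeasurableSpace X] [BorelSpace X]
    (μ : Measure X)
    (hpos : ∀ (x : X) (r : ℝ), 0 < r → 0 < μ (ball x r))
    (hfin : ∀ (x : X) (r : ℝ), 0 < r → μ (ball x r) < ⊤)
    (Cv : ℝ≥0∞) (hCv : Cv < ⊤) (n : ℝ) (hn : 0 < n)
    (hgrowth : ∀ (x : X) (r l : ℝ), 0 < r → 1 ≤ l →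
      μ (ball x (l * r)) ≤ Cv * ENNReal.ofReal l ^ n * μ (ball x r))
    (p : ℝ → X → X → ℂ)
    (hpmeas : ∀ t : ℝ, Measurable (fun q : X × X => p t q.1 q.2))
    (CG c : ℝ) (hCG : 0 < CG) (hc : 0 < c)
    (hGauss : ∀ t : ℝ, 0 < t → ∀ᵐ q ∂(μ.prod μ),
      (‖p t q.1 q.2‖₊ : ℝ≥0∞) ≤ (ENNReal.ofReal CG / μ (ball q.1 (Real.sqrt t))) *
        ENNReal.ofReal (Real.exp (-(dist q.1 q.2) ^ 2 / (c * t)))) :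
    ∃ C' c' : ℝ, 0 < C' ∧ 0 < c' ∧ ∀ t : ℝ, 0 < t →
      ∀ U₁ U₂ : Set X, IsOpen U₁ → IsOpen U₂ →
      ∀ f₁ f₂ : X → ℂ, MemLp f₁ 2 μ → MemLp f₂ 2 μ →
        Function.support f₁ ⊆ U₁ → Function.support f₂ ⊆ U₂ →
        (∫⁻ x, ∫⁻ y, (‖p t x y‖₊ : ℝ≥0∞) * ‖f₁ y‖₊ * ‖f₂ x‖₊ ∂μ ∂μ) ≤
          ENNReal.ofReal (C' * Real.exp (-(setDist U₁ U₂) ^ 2 / (c' * t))) *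
            eLpNorm f₁ 2 μ * eLpNorm f₂ 2 μ := by
  classical
  set Cr : ℝ := max 1 Cv.toReal with hCrdef
  have hC1 : (1:ℝ) ≤ Cr := le_max_left _ _
  have hCvle : Cv ≤ ENNReal.ofReal Cr := by
    conv_lhs => rw [← ENNReal.ofReal_toReal hCv.ne]
    exact ENNReal.ofReal_le_ofReal (le_max_right _ _)
  have hg' : ∀ (x : X) (r l : ℝ), 0 < r → 1 ≤ l →
      μ (ball x (l * r)) ≤ ENNReal.ofReal (Cr * l ^ n) * μ (ball x r) := by
    intro x r l h1 h2
    refine (hgrowth x r l h1 h2).trans (mul_le_mul_left ?_ _)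
    rw [ENNReal.ofReal_mul (by linarith)]
    apply mul_le_mul' hCvle
    exact le_of_eq (ENNReal.ofReal_rpow_of_pos (by linarith))
  have hsum : Summable (fun j : ℕ => ((j:ℝ)+2)^n * (((j:ℝ)+2)^n *
      Real.exp (-(j:ℝ)^2/(2*c)))) := aux_summable hn hc
  set T : ℝ := ∑' j : ℕ, ((j:ℝ)+2)^n * (((j:ℝ)+2)^n * Real.exp (-(j:ℝ)^2/(2*c))) with hT
  have hT0 : 0 ≤ T := tsum_nonneg (fun j => by positivity)
  set M : ℝ := Cr^2 * T with hM
  have hM0 : 0 ≤ M := mul_nonneg (by positivity) hT0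
  refine ⟨CG * M + 1, 2*c, by have := mul_nonneg hCG.le hM0; linarith, by positivity, ?_⟩
  intro t ht U₁ U₂ hU₁ hU₂ f₁ f₂ hf₁ hf₂ hsupp₁ hsupp₂
  rcases isEmpty_or_nonempty X with hX|hX
  · have hμ : μ = 0 := Subsingleton.elim μ 0
    simp [hμ]
  obtain ⟨x₀⟩ := hX
  haveI hsepX : TopologicalSpace.SeparableSpace X :=
    aux_separable μ hpos hfin hCv hn hgrowth
  haveI : SecondCountableTopology X := UniformSpace.secondCountable_of_separable X
  haveI : SigmaFinite μ := by
    refine ⟨⟨⟨fun k => ball x₀ ((k:ℝ)+1), fun _ => trivial,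
      fun k => hfin x₀ _ (by positivity), ?_⟩⟩⟩
    apply Set.eq_univ_of_forall
    intro z
    exact mem_iUnion.2 ⟨⌊dist z x₀⌋₊, mem_ball.2 (Nat.lt_floor_add_one _)⟩
  set s : ℝ := Real.sqrt t with hsdef
  have hs0 : 0 < s := Real.sqrt_pos.2 ht
  -- measurability of the ball volume
  have hdistP : Measurable fun q : X × X => dist q.1 q.2 := measurable_dist
  have hvb : Measurable fun x => μ (ball x s) := by
    have hset : MeasurableSet {q : X × X | dist q.1 q.2 < s} :=
      measurableSet_lt hdistP measurable_const
    have h := measurable_measure_prodMk_left (ν := μ) hset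
    have heq : (fun x => μ (Prod.mk x ⁻¹' {q : X × X | dist q.1 q.2 < s})) =
        fun x => μ (ball x s) := by
      funext x
      congr 1
      ext z
      simp only [mem_preimage, mem_setOf_eq, mem_ball]
      exact ⟨fun h' => by rwa [dist_comm], fun h' => by rwa [dist_comm]⟩
    rwa [heq] at h
  set E : ℝ≥0∞ := ENNReal.ofReal (Real.exp (-(setDist U₁ U₂)^2/(2*c*t))) with hE
  set k : X → X → ℝ≥0∞ := fun x y =>
    (μ (ball x s))⁻¹ * ENNReal.ofReal (Real.exp (-(dist x y)^2/(2*c*t))) with hk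
  -- Step 1 : pointwise domination
  have hae := Measure.ae_ae_of_ae_prod (hGauss t ht)
  have step1 : (∫⁻ x, ∫⁻ y, (‖p t x y‖₊ : ℝ≥0∞) * ‖f₁ y‖₊ * ‖f₂ x‖₊ ∂μ ∂μ) ≤
      ∫⁻ x, ∫⁻ y, (E * ENNReal.ofReal CG) * (k x y * ‖f₁ y‖₊ * ‖f₂ x‖₊) ∂μ ∂μ := by
    apply lintegral_mono_ae
    filter_upwards [hae] with x hx
    apply lintegral_mono_ae
    filter_upwards [hx] with y hy
    by_cases h1 : f₁ y = 0
    · simp [h1]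
    by_cases h2 : f₂ x = 0
    · simp [h2]
    have hy1 : y ∈ U₁ := hsupp₁ h1
    have hx2 : x ∈ U₂ := hsupp₂ h2
    have hmem : dist y x ∈ Set.image2 dist U₁ U₂ := mem_image2_of_mem hy1 hx2
    have hbdd : BddBelow (Set.image2 dist U₁ U₂) := by
      refine ⟨0, fun d hd => ?_⟩
      obtain ⟨a, -, b, -, rfl⟩ := hd
      exact dist_nonneg
    have hr0 : 0 ≤ setDist U₁ U₂ := by
      apply le_csInf ⟨_, hmem⟩
      rintro d ⟨a, -, b, -, rfl⟩
      exact dist_nonneg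
    have hrle : setDist U₁ U₂ ≤ dist x y := by
      rw [dist_comm]
      exact csInf_le hbdd hmem
    have hsplit : Real.exp (-(dist x y)^2/(c*t)) ≤
        Real.exp (-(setDist U₁ U₂)^2/(2*c*t)) * Real.exp (-(dist x y)^2/(2*c*t)) := by
      rw [← Real.exp_add]
      apply Real.exp_le_exp.2
      have hd2 : (setDist U₁ U₂)^2 ≤ (dist x y)^2 := pow_le_pow_left₀ hr0 hrle 2
      have heq2 : -(dist x y)^2/(c*t) =
          -(dist x y)^2/(2*c*t) + -(dist x y)^2/(2*c*t) := by ring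
      rw [heq2]
      apply add_le_add_left
      rw [neg_div, neg_div, neg_le_neg_iff]
      gcongr
    have h3 : ENNReal.ofReal (Real.exp (-(dist x y)^2/(c*t))) ≤
        E * ENNReal.ofReal (Real.exp (-(dist x y)^2/(2*c*t))) := by
      rw [hE, ← ENNReal.ofReal_mul (Real.exp_nonneg _)]
      exact ENNReal.ofReal_le_ofReal hsplit
    calc (‖p t x y‖₊ : ℝ≥0∞) * ‖f₁ y‖₊ * ‖f₂ x‖₊
        ≤ ((ENNReal.ofReal CG / μ (ball x s)) *
            ENNReal.ofReal (Real.exp (-(dist x y)^2/(c*t)))) * ‖f₁ y‖₊ * ‖f₂ x‖₊ :=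
          mul_le_mul_left (mul_le_mul_left hy _) _
      _ ≤ ((ENNReal.ofReal CG / μ (ball x s)) *
            (E * ENNReal.ofReal (Real.exp (-(dist x y)^2/(2*c*t))))) * ‖f₁ y‖₊ * ‖f₂ x‖₊ :=
          mul_le_mul_left (mul_le_mul_left (mul_le_mul_right h3 _) _) _
      _ = (E * ENNReal.ofReal CG) * (k x y * ‖f₁ y‖₊ * ‖f₂ x‖₊) := by
          rw [hk, div_eq_mul_inv]
          ring
  have hECne : E * ENNReal.ofReal CG ≠ ⊤ :=
    ENNReal.mul_ne_top ENNReal.ofReal_ne_top ENNReal.ofReal_ne_top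
  have step2 : (∫⁻ x, ∫⁻ y, (E * ENNReal.ofReal CG) * (k x y * ‖f₁ y‖₊ * ‖f₂ x‖₊) ∂μ ∂μ)
      = (E * ENNReal.ofReal CG) * ∫⁻ x, ∫⁻ y, k x y * ‖f₁ y‖₊ * ‖f₂ x‖₊ ∂μ ∂μ := by
    simp_rw [lintegral_const_mul' _ _ hECne]
  -- replace f by strongly measurable representatives
  obtain ⟨g₁, hg₁m, hg₁e⟩ := hf₁.1
  obtain ⟨g₂, hg₂m, hg₂e⟩ := hf₂.1
  have hJeq : (∫⁻ x, ∫⁻ y, k x y * ‖f₁ y‖₊ * ‖f₂ x‖₊ ∂μ ∂μ)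
      = ∫⁻ x, ∫⁻ y, k x y * ‖g₁ y‖₊ * ‖g₂ x‖₊ ∂μ ∂μ := by
    apply lintegral_congr_ae
    filter_upwards [hg₂e] with x hx2
    rw [hx2]
    apply lintegral_congr_ae
    filter_upwards [hg₁e] with y hy1
    rw [hy1]
  have hsn₁ : eLpNorm f₁ 2 μ = eLpNorm g₁ 2 μ := eLpNorm_congr_ae hg₁e
  have hsn₂ : eLpNorm f₂ 2 μ = eLpNorm g₂ 2 μ := eLpNorm_congr_ae hg₂e
  -- measurability facts
  have hexpP : Measurable fun q : X × X => Real.exp (-(dist q.1 q.2)^2/(2*c*t)) :=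
    (((hdistP.pow_const 2).neg).div_const (2*c*t)).exp
  have hkP : Measurable fun q : X × X => k q.1 q.2 :=
    ((hvb.comp measurable_fst).inv).mul hexpP.ennreal_ofReal
  have hn₁ : Measurable fun y => (‖g₁ y‖₊ : ℝ≥0∞) := hg₁m.measurable.nnnorm.coe_nnreal_ennreal
  have hn₂ : Measurable fun x => (‖g₂ x‖₊ : ℝ≥0∞) := hg₂m.measurable.nnnorm.coe_nnreal_ennreal
  -- the Schur bounds
  set S : ℝ≥0∞ := ∑' j : ℕ, ENNReal.ofReal (Cr^2 * (((j:ℝ)+2)^n * (((j:ℝ)+2)^n *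
    Real.exp (-(j:ℝ)^2/(2*c))))) with hS
  have hSM : S = ENNReal.ofReal M := by
    rw [hS, hM, ← ENNReal.ofReal_tsum_of_nonneg (fun j => by positivity)
      (hsum.mul_left (Cr^2)), tsum_mul_left]
  have hSne : S ≠ ⊤ := by rw [hSM]; exact ENNReal.ofReal_ne_top
  have hSA : ∀ x : X, (∫⁻ y, k x y ∂μ) ≤ S :=
    fun x => schurA μ hpos hfin hC1 hn hg' hc ht x
  have hSB : ∀ y : X, (∫⁻ x, k x y ∂μ) ≤ S :=
    fun y => schurB μ hpos hfin hC1 hn hg' hc ht y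
  have hconj : Real.HolderConjugate 2 2 := Real.holderConjugate_iff.2 ⟨one_lt_two, by norm_num⟩
  -- inner Cauchy–Schwarz
  have inner_bound : ∀ x : X, (∫⁻ y, k x y * ‖g₁ y‖₊ ∂μ) ≤
      S^(1/2:ℝ) * (∫⁻ y, k x y * (‖g₁ y‖₊ : ℝ≥0∞)^(2:ℝ) ∂μ)^(1/2:ℝ) := by
    intro x
    have hky : Measurable fun y => k x y :=
      measurable_const.mul ((((continuous_const.dist continuous_id).measurable.pow_const
        2).neg.div_const (2*c*t)).exp.ennreal_ofReal)
    have hH := ENNReal.lintegral_mul_le_Lp_mul_Lq μ hconj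
      (f := fun y => (k x y)^(1/2:ℝ)) (g := fun y => (k x y)^(1/2:ℝ) * ‖g₁ y‖₊)
      (hky.pow_const _).aemeasurable ((hky.pow_const _).mul hn₁).aemeasurable
    have e1 : ∀ y : X, ((k x y)^(1/2:ℝ)) * ((k x y)^(1/2:ℝ) * (‖g₁ y‖₊ : ℝ≥0∞)) =
        k x y * ‖g₁ y‖₊ := by
      intro y
      rw [← mul_assoc, ← ENNReal.rpow_add_of_nonneg _ _ (by norm_num) (by norm_num)]
      norm_num
    have e2 : ∀ y : X, ((k x y)^(1/2:ℝ))^(2:ℝ) = k x y := by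
      intro y
      rw [← ENNReal.rpow_mul]
      norm_num
    have e3 : ∀ y : X, (((k x y)^(1/2:ℝ)) * (‖g₁ y‖₊ : ℝ≥0∞))^(2:ℝ) =
        k x y * (‖g₁ y‖₊ : ℝ≥0∞)^(2:ℝ) := by
      intro y
      rw [ENNReal.mul_rpow_of_nonneg _ _ (by norm_num), e2]
    calc (∫⁻ y, k x y * ‖g₁ y‖₊ ∂μ)
        = ∫⁻ y, ((fun y => (k x y)^(1/2:ℝ)) * fun y => (k x y)^(1/2:ℝ) * ‖g₁ y‖₊) y ∂μ := by
          apply lintegral_congr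
          intro y
          simp only [Pi.mul_apply]
          rw [e1]
      _ ≤ (∫⁻ y, ((k x y)^(1/2:ℝ))^(2:ℝ) ∂μ)^(1/2:ℝ) *
          (∫⁻ y, (((k x y)^(1/2:ℝ)) * (‖g₁ y‖₊ : ℝ≥0∞))^(2:ℝ) ∂μ)^(1/2:ℝ) := hH
      _ = (∫⁻ y, k x y ∂μ)^(1/2:ℝ) *
          (∫⁻ y, k x y * (‖g₁ y‖₊ : ℝ≥0∞)^(2:ℝ) ∂μ)^(1/2:ℝ) := by
          congr 1
          · congr 1
            exact lintegral_congr e2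
          · congr 1
            exact lintegral_congr e3
      _ ≤ S^(1/2:ℝ) * (∫⁻ y, k x y * (‖g₁ y‖₊ : ℝ≥0∞)^(2:ℝ) ∂μ)^(1/2:ℝ) := by
          gcongr
          exact hSA x
  -- the double integral with g₁ squared
  set G : X → ℝ≥0∞ := fun x => ∫⁻ y, k x y * (‖g₁ y‖₊ : ℝ≥0∞)^(2:ℝ) ∂μ with hG
  have hGmeas : Measurable G := by
    apply Measurable.lintegral_prod_right' (f := fun q : X × X => k q.1 q.2 * (‖g₁ q.2‖₊ : ℝ≥0∞)^(2:ℝ))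
    exact hkP.mul ((hn₁.comp measurable_snd).pow_const _)
  have hGint : (∫⁻ x, G x ∂μ) ≤ S * ∫⁻ y, (‖g₁ y‖₊ : ℝ≥0∞)^(2:ℝ) ∂μ := by
    have hswap : (∫⁻ x, G x ∂μ) = ∫⁻ y, ∫⁻ x, k x y * (‖g₁ y‖₊ : ℝ≥0∞)^(2:ℝ) ∂μ ∂μ := by
      apply lintegral_lintegral_swap
      exact (hkP.mul ((hn₁.comp measurable_snd).pow_const _)).aemeasurable
    rw [hswap]
    have hinner : ∀ y : X, (∫⁻ x, k x y * (‖g₁ y‖₊ : ℝ≥0∞)^(2:ℝ) ∂μ) ≤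
        S * (‖g₁ y‖₊ : ℝ≥0∞)^(2:ℝ) := by
      intro y
      rw [lintegral_mul_const' _ _ (ENNReal.rpow_ne_top_of_nonneg (by norm_num) ENNReal.coe_ne_top)]
      exact mul_le_mul_left (hSB y) _
    calc (∫⁻ y, ∫⁻ x, k x y * (‖g₁ y‖₊ : ℝ≥0∞)^(2:ℝ) ∂μ ∂μ)
        ≤ ∫⁻ y, S * (‖g₁ y‖₊ : ℝ≥0∞)^(2:ℝ) ∂μ := lintegral_mono hinner
      _ = S * ∫⁻ y, (‖g₁ y‖₊ : ℝ≥0∞)^(2:ℝ) ∂μ := lintegral_const_mul' _ _ hSne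
  -- outer Cauchy–Schwarz
  set N₁ : ℝ≥0∞ := (∫⁻ y, (‖g₁ y‖₊ : ℝ≥0∞)^(2:ℝ) ∂μ)^(1/2:ℝ) with hN₁
  set N₂ : ℝ≥0∞ := (∫⁻ x, (‖g₂ x‖₊ : ℝ≥0∞)^(2:ℝ) ∂μ)^(1/2:ℝ) with hN₂
  have outer : (∫⁻ x, (G x)^(1/2:ℝ) * ‖g₂ x‖₊ ∂μ) ≤ (∫⁻ x, G x ∂μ)^(1/2:ℝ) * N₂ := by
    have hH := ENNReal.lintegral_mul_le_Lp_mul_Lq μ hconj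
      (f := fun x => (G x)^(1/2:ℝ)) (g := fun x => (‖g₂ x‖₊ : ℝ≥0∞))
      (hGmeas.pow_const _).aemeasurable hn₂.aemeasurable
    have e2 : ∀ x : X, ((G x)^(1/2:ℝ))^(2:ℝ) = G x := by
      intro x
      rw [← ENNReal.rpow_mul]
      norm_num
    calc (∫⁻ x, (G x)^(1/2:ℝ) * ‖g₂ x‖₊ ∂μ)
        = ∫⁻ x, ((fun x => (G x)^(1/2:ℝ)) * fun x => (‖g₂ x‖₊ : ℝ≥0∞)) x ∂μ := rfl
      _ ≤ (∫⁻ x, ((G x)^(1/2:ℝ))^(2:ℝ) ∂μ)^(1/2:ℝ) *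
          (∫⁻ x, (‖g₂ x‖₊ : ℝ≥0∞)^(2:ℝ) ∂μ)^(1/2:ℝ) := hH
      _ = (∫⁻ x, G x ∂μ)^(1/2:ℝ) * N₂ := by
          rw [hN₂]
          congr 2
          exact lintegral_congr e2
  -- assemble the Schur estimate for J
  have hJ : (∫⁻ x, ∫⁻ y, k x y * ‖g₁ y‖₊ * ‖g₂ x‖₊ ∂μ ∂μ) ≤ S * N₁ * N₂ := by
    have hstep : ∀ x : X, (∫⁻ y, k x y * ‖g₁ y‖₊ * ‖g₂ x‖₊ ∂μ) =
        (∫⁻ y, k x y * ‖g₁ y‖₊ ∂μ) * ‖g₂ x‖₊ :=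
      fun x => lintegral_mul_const' _ _ ENNReal.coe_ne_top
    calc (∫⁻ x, ∫⁻ y, k x y * ‖g₁ y‖₊ * ‖g₂ x‖₊ ∂μ ∂μ)
        = ∫⁻ x, (∫⁻ y, k x y * ‖g₁ y‖₊ ∂μ) * ‖g₂ x‖₊ ∂μ := lintegral_congr hstep
      _ ≤ ∫⁻ x, (S^(1/2:ℝ) * (G x)^(1/2:ℝ)) * ‖g₂ x‖₊ ∂μ := by
          apply lintegral_mono
          intro x
          exact mul_le_mul_left (inner_bound x) _
      _ = S^(1/2:ℝ) * ∫⁻ x, (G x)^(1/2:ℝ) * ‖g₂ x‖₊ ∂μ := by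
          simp_rw [mul_assoc]
          exact lintegral_const_mul' _ _ (ENNReal.rpow_ne_top_of_nonneg (by norm_num) hSne)
      _ ≤ S^(1/2:ℝ) * ((∫⁻ x, G x ∂μ)^(1/2:ℝ) * N₂) := mul_le_mul_right outer _
      _ ≤ S^(1/2:ℝ) * ((S * ∫⁻ y, (‖g₁ y‖₊ : ℝ≥0∞)^(2:ℝ) ∂μ)^(1/2:ℝ) * N₂) := by
          gcongr
      _ = S^(1/2:ℝ) * (S^(1/2:ℝ) * N₁ * N₂) := by
          rw [ENNReal.mul_rpow_of_nonneg _ _ (by norm_num), hN₁]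
      _ = (S^(1/2:ℝ) * S^(1/2:ℝ)) * N₁ * N₂ := by ring
      _ = S * N₁ * N₂ := by
          rw [← ENNReal.rpow_add_of_nonneg _ _ (by norm_num) (by norm_num)]
          norm_num
  -- identify N with eLpNorm
  have hNsn₁ : N₁ = eLpNorm g₁ 2 μ := by
    rw [eLpNorm_eq_lintegral_rpow_enorm_toReal (by norm_num) (by norm_num), hN₁]
    norm_num [enorm_eq_nnnorm]
  have hNsn₂ : N₂ = eLpNorm g₂ 2 μ := by
    rw [eLpNorm_eq_lintegral_rpow_enorm_toReal (by norm_num) (by norm_num), hN₂]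
    norm_num [enorm_eq_nnnorm]
  -- final assembly
  have hcore : E * ENNReal.ofReal CG * S ≤
      ENNReal.ofReal ((CG * M + 1) * Real.exp (-(setDist U₁ U₂)^2/(2*c*t))) := by
    rw [hSM, hE, ← ENNReal.ofReal_mul (Real.exp_nonneg _), ← ENNReal.ofReal_mul (by positivity)]
    apply ENNReal.ofReal_le_ofReal
    have he0 := Real.exp_nonneg (-(setDist U₁ U₂)^2/(2*c*t))
    nlinarith
  calc (∫⁻ x, ∫⁻ y, (‖p t x y‖₊ : ℝ≥0∞) * ‖f₁ y‖₊ * ‖f₂ x‖₊ ∂μ ∂μ)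
      ≤ ∫⁻ x, ∫⁻ y, (E * ENNReal.ofReal CG) * (k x y * ‖f₁ y‖₊ * ‖f₂ x‖₊) ∂μ ∂μ := step1
    _ = (E * ENNReal.ofReal CG) * ∫⁻ x, ∫⁻ y, k x y * ‖f₁ y‖₊ * ‖f₂ x‖₊ ∂μ ∂μ := step2
    _ = (E * ENNReal.ofReal CG) * ∫⁻ x, ∫⁻ y, k x y * ‖g₁ y‖₊ * ‖g₂ x‖₊ ∂μ ∂μ := by rw [hJeq]
    _ ≤ (E * ENNReal.ofReal CG) * (S * N₁ * N₂) := mul_le_mul_right hJ _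
    _ = (E * ENNReal.ofReal CG * S) * eLpNorm f₁ 2 μ * eLpNorm f₂ 2 μ := by
        rw [hNsn₁, hNsn₂, ← hsn₁, ← hsn₂]
        ring
    _ ≤ ENNReal.ofReal ((CG * M + 1) * Real.exp (-(setDist U₁ U₂)^2/(2*c*t))) *
        eLpNorm f₁ 2 μ * eLpNorm f₂ 2 μ := by
        gcongr
end

section
/- Let (X,d,μ) be a space of homogeneous type with μ(X) = ∞, let 0 < p ≤ 1, and let w ∈ A_1 ∩ RH_{2/(2−p)}. Then there exists a constant C > 0 such that every T_w^p-atom a satisfies ‖a‖_{T_w^p} = ‖𝒜(a)‖_{L_w^p(X)} ≤ C; in particular every T_w^p-atom belongs to T_w^p(X). -/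
open MeasureTheory Metric Set ENNReal

/-- The Muckenhoupt `A_1` condition on a metric measure space. -/
def IsA1 {X : Type*} [MetricSpace X] [MeasurableSpace X]
    (μ : Measure X) (w : X → ℝ≥0∞) : Prop :=
  ∃ C : ℝ≥0∞, C < ⊤ ∧ ∀ (x : X) (r : ℝ), 0 < r →
    ∀ᵐ z ∂(μ.restrict (ball x r)),
      (∫⁻ y in ball x r, w y ∂μ) / μ (ball x r) ≤ C * w z

/-- The reverse Hölder condition `RH_q` (for `1 < q < ∞`) on a metric measure space. -/
def IsRH {X : Type*} [MetricSpace X] [MeasurableSpace X]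
    (μ : Measure X) (w : X → ℝ≥0∞) (q : ℝ) : Prop :=
  ∃ C : ℝ≥0∞, C < ⊤ ∧ ∀ (x : X) (r : ℝ), 0 < r →
    ((∫⁻ y in ball x r, w y ^ q ∂μ) / μ (ball x r)) ^ (1 / q) ≤
      C * ((∫⁻ y in ball x r, w y ∂μ) / μ (ball x r))

/-- The area functional
`𝒜(F)(x) = (∬_{d(x,y)<t} |F(y,t)|² dμ(y) dt / (V(x,t) t))^{1/2}`. -/
noncomputable def areaA {X : Type*} [MetricSpace X] [MeasurableSpace X]
    (μ : Measure X) (F : X → ℝ → ℝ) (x : X) : ℝ≥0∞ :=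
  (∫⁻ t in Set.Ioi (0 : ℝ), ∫⁻ y in ball x t,
      ENNReal.ofReal ((F y t) ^ 2) / (μ (ball x t) * ENNReal.ofReal t) ∂μ) ^ (1 / 2 : ℝ)

/-- The weighted tent space quasinorm `‖F‖_{T_w^p} = ‖𝒜(F)‖_{L_w^p}`. -/
noncomputable def tentNorm {X : Type*} [MetricSpace X] [MeasurableSpace X]
    (μ : Measure X) (w : X → ℝ≥0∞) (p : ℝ) (F : X → ℝ → ℝ) : ℝ≥0∞ :=
  (∫⁻ x, areaA μ F x ^ p * w x ∂μ) ^ (1 / p)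

/-- A `T_w^p(X)`-atom: a function `a` on `X × (0,∞)` supported in the tent `B̂` over some
ball `B = B(x_B,r_B)` with `(∬_{B̂} |a(y,t)|² (w(B(y,t))/V(y,t)) dμ(y)dt/t)^{1/2}
  ≤ w(B)^{1/2-1/p}`. -/
def IsTentAtom {X : Type*} [MetricSpace X] [MeasurableSpace X]
    (μ : Measure X) (w : X → ℝ≥0∞) (p : ℝ) (a : X → ℝ → ℝ) : Prop :=
  Measurable (fun q : X × ℝ => a q.1 q.2) ∧
  ∃ (xB : X) (rB : ℝ), 0 < rB ∧
    (∀ (y : X) (t : ℝ), a y t ≠ 0 → 0 < t ∧ dist y xB + t < rB) ∧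
    (∫⁻ t in Set.Ioi (0 : ℝ), ∫⁻ y,
        ENNReal.ofReal ((a y t) ^ 2) * (∫⁻ z in ball y t, w z ∂μ) /
          (μ (ball y t) * ENNReal.ofReal t) ∂μ) ^ (1 / 2 : ℝ) ≤
      (∫⁻ z in ball xB rB, w z ∂μ) ^ (1 / 2 - 1 / p)

set_option maxHeartbeats 1000000

lemma doubling_iterate {X : Type*} [MetricSpace X] [MeasurableSpace X]
    (μ : Measure X) (Cd : ℝ≥0∞)
    (hdb : ∀ (x : X) (r : ℝ), 0 < r → μ (ball x (2 * r)) ≤ Cd * μ (ball x r)) :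
    ∀ (x : X) (r : ℝ), 0 < r → ∀ k : ℕ, μ (ball x (2 ^ k * r)) ≤ Cd ^ k * μ (ball x r) := by
  intro x r hr k
  induction k with
  | zero => simp
  | succ k ih =>
    have h2 : (2:ℝ) ^ (k+1) * r = 2 * (2 ^ k * r) := by ring
    rw [h2]
    calc μ (ball x (2 * (2 ^ k * r))) ≤ Cd * μ (ball x (2 ^ k * r)) := hdb x _ (by positivity)
      _ ≤ Cd * (Cd ^ k * μ (ball x r)) := mul_le_mul_right ih Cd
      _ = Cd ^ (k+1) * μ (ball x r) := by ring

lemma secondCountable_of_doubling {X : Type*} [MetricSpace X] [MeasurableSpace X] [BorelSpace X]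
    (μ : Measure X) (Cd : ℝ≥0∞) (hCd : Cd < ⊤)
    (hdb : ∀ (x : X) (r : ℝ), 0 < r → μ (ball x (2 * r)) ≤ Cd * μ (ball x r))
    (hpos : ∀ (x : X) (r : ℝ), 0 < r → 0 < μ (ball x r))
    (hfin : ∀ (x : X) (r : ℝ), 0 < r → μ (ball x r) < ⊤)
    (x₀ : X) : SecondCountableTopology X := by
  have hCd0 : Cd ≠ 0 := by
    intro h
    have h1 := hdb x₀ 1 one_pos
    rw [h, zero_mul, le_zero_iff] at h1
    exact absurd h1 (hpos x₀ (2*1) (by norm_num)).ne'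
  -- every ball is totally bounded
  have htb : ∀ (R : ℝ), TotallyBounded (ball x₀ R) := by
    intro R
    classical
    by_contra hnt
    rw [totallyBounded_iff] at hnt
    push_neg at hnt
    obtain ⟨ε, hε, hcov⟩ := hnt
    have H : ∀ F : Finset X, ∃ z, z ∈ ball x₀ R ∧ ∀ y ∈ F, ε ≤ dist z y := by
      intro F
      obtain ⟨z, hz1, hz2⟩ := not_subset.mp (hcov (↑F) F.finite_toSet)
      refine ⟨z, hz1, fun y hy => ?_⟩
      by_contra h
      push_neg at h
      exact hz2 (Set.mem_biUnion (Finset.mem_coe.mpr hy) (mem_ball.mpr h))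
    choose f hf1 hf2 using H
    set v : ℕ → Finset X := fun n => Nat.rec ∅ (fun _ s => insert (f s) s) n with hv_def
    have hv : ∀ n, v (n+1) = insert (f (v n)) (v n) := fun n => rfl
    have hvmono : ∀ {m n : ℕ}, m ≤ n → v m ⊆ v n := by
      intro m n h
      induction h with
      | refl => exact subset_rfl
      | step _ ih => exact ih.trans (by rw [hv]; exact Finset.subset_insert _ _)
    set u : ℕ → X := fun n => f (v n) with hu_def
    have hu_mem : ∀ n, u n ∈ ball x₀ R := fun n => hf1 (v n)
    have hu_sep : ∀ m n : ℕ, m < n → ε ≤ dist (u n) (u m) := by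
      intro m n hmn
      apply hf2 (v n)
      have h1 : u m ∈ v (m+1) := by rw [hv]; exact Finset.mem_insert_self _ _
      exact hvmono hmn h1
    have hR : 0 < R := lt_of_le_of_lt dist_nonneg (mem_ball.mp (hu_mem 0))
    have hpair : Pairwise (Function.onFun Disjoint fun n => ball (u n) (ε/2)) := by
      intro m n hmn
      rcases lt_or_gt_of_ne hmn with h | h
      · refine ball_disjoint_ball ?_
        have h1 := hu_sep m n h
        have h2 : dist (u m) (u n) = dist (u n) (u m) := dist_comm _ _
        linarith
      · refine ball_disjoint_ball ?_
        have h1 := hu_sep n m h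
        linarith
    obtain ⟨k, hk⟩ := pow_unbounded_of_one_lt ((2*(R+ε))/(ε/2)) (one_lt_two (α := ℝ))
    have hk' : 2*(R+ε) ≤ 2 ^ k * (ε/2) := by
      rw [div_lt_iff₀ (half_pos hε)] at hk
      exact hk.le
    have hsub1 : ∀ n, ball x₀ (R+ε) ⊆ ball (u n) ((2:ℝ) ^ k * (ε/2)) := by
      intro n z hz
      rw [mem_ball] at *
      have h1 : dist x₀ (u n) < R := by rw [dist_comm]; exact mem_ball.mp (hu_mem n)
      calc dist z (u n) ≤ dist z x₀ + dist x₀ (u n) := dist_triangle _ _ _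
        _ < (R+ε) + R := by linarith
        _ ≤ 2 ^ k * (ε/2) := by linarith
    have hsub2 : ∀ n, ball (u n) (ε/2) ⊆ ball x₀ (R+ε) := by
      intro n z hz
      rw [mem_ball] at *
      have h1 : dist (u n) x₀ < R := mem_ball.mp (hu_mem n)
      calc dist z x₀ ≤ dist z (u n) + dist (u n) x₀ := dist_triangle _ _ _
        _ < ε/2 + R := by linarith
        _ ≤ R + ε := by linarith
    set m : ℝ≥0∞ := μ (ball x₀ (R+ε)) with hm_def
    have hm0 : m ≠ 0 := (hpos x₀ (R+ε) (by linarith)).ne'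
    have hmfin : m ≠ ⊤ := (hfin x₀ (R+ε) (by linarith)).ne
    have hlow : ∀ n, m ≤ Cd ^ k * μ (ball (u n) (ε/2)) := fun n =>
      (measure_mono (hsub1 n)).trans (doubling_iterate μ Cd hdb (u n) (ε/2) (half_pos hε) k)
    set c : ℝ≥0∞ := m / Cd ^ k with hc_def
    have hc0 : c ≠ 0 := by
      simp only [hc_def, ne_eq, ENNReal.div_eq_zero_iff, not_or]
      exact ⟨hm0, ENNReal.pow_ne_top hCd.ne⟩
    have hcle : ∀ n, c ≤ μ (ball (u n) (ε/2)) := by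
      intro n
      rw [hc_def, ENNReal.div_le_iff_le_mul (Or.inl (pow_ne_zero k hCd0))
        (Or.inl (ENNReal.pow_ne_top hCd.ne))]
      rw [mul_comm]
      exact hlow n
    have htop : (⊤ : ℝ≥0∞) ≤ m := by
      calc (⊤ : ℝ≥0∞) = ∑' _ : ℕ, c := (ENNReal.tsum_const_eq_top_of_ne_zero hc0).symm
        _ ≤ ∑' n : ℕ, μ (ball (u n) (ε/2)) := ENNReal.tsum_le_tsum hcle
        _ = μ (⋃ n, ball (u n) (ε/2)) :=
            (measure_iUnion hpair fun n => measurableSet_ball).symm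
        _ ≤ m := measure_mono (Set.iUnion_subset hsub2)
    exact hmfin (top_le_iff.mp htop)
  -- separability
  have hsep : TopologicalSpace.SeparableSpace X := by
    rw [← TopologicalSpace.isSeparable_univ_iff]
    have : (Set.univ : Set X) = ⋃ n : ℕ, ball x₀ (n+1) := by
      ext z
      simp only [Set.mem_univ, Set.mem_iUnion, mem_ball, true_iff]
      obtain ⟨n, hn⟩ := exists_nat_gt (dist z x₀)
      exact ⟨n, by push_cast; linarith⟩
    rw [this]
    exact TopologicalSpace.isSeparable_iUnion.mpr fun n => (htb (n+1)).isSeparable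
  exact UniformSpace.secondCountable_of_separable X

/-- Measurability of `(x, r) ↦ ∫⁻_{B(x,r)} w dμ`. -/
lemma meas_setLIntegral_ball {X : Type*} [MetricSpace X] [MeasurableSpace X] [BorelSpace X]
    [SecondCountableTopology X]
    (μ : Measure X) [SFinite μ] (w : X → ℝ≥0∞) (hw : Measurable w) :
    Measurable fun q : X × ℝ => ∫⁻ z in ball q.1 q.2, w z ∂μ := by
  have hS : MeasurableSet {r : (X × ℝ) × X | dist r.2 r.1.1 < r.1.2} :=
    (isOpen_lt (continuous_snd.dist continuous_fst.fst) continuous_fst.snd).measurableSet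
  have heq : (fun q : X × ℝ => ∫⁻ z in ball q.1 q.2, w z ∂μ)
      = fun q : X × ℝ => ∫⁻ z, ({r : (X × ℝ) × X | dist r.2 r.1.1 < r.1.2}).indicator
          (fun r => w r.2) (q, z) ∂μ := by
    funext q
    rw [← lintegral_indicator measurableSet_ball]
    refine lintegral_congr fun z => ?_
    by_cases h : z ∈ ball q.1 q.2
    · rw [Set.indicator_of_mem h, Set.indicator_of_mem (by simpa [mem_ball] using h)]
    · rw [Set.indicator_of_notMem h, Set.indicator_of_notMem (by simpa [mem_ball] using h)]
  rw [heq]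
  exact Measurable.lintegral_prod_right ((hw.comp measurable_snd).indicator hS)

lemma tentAtom_bound
    {X : Type*} [MetricSpace X] [MeasurableSpace X] [BorelSpace X]
    (μ : Measure X)
    (Cd : ℝ≥0∞) (hCd : Cd < ⊤)
    (hdb : ∀ (x : X) (r : ℝ), 0 < r → μ (ball x (2 * r)) ≤ Cd * μ (ball x r))
    (hpos : ∀ (x : X) (r : ℝ), 0 < r → 0 < μ (ball x r))
    (hfin : ∀ (x : X) (r : ℝ), 0 < r → μ (ball x r) < ⊤)
    (hμinf : μ Set.univ = ⊤)
    (w : X → ℝ≥0∞) (hw : Measurable w)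
    (hwloc : ∀ (x : X) (r : ℝ), 0 < r → ∫⁻ y in ball x r, w y ∂μ < ⊤)
    (p : ℝ) (hp0 : 0 < p) (hp1 : p ≤ 1)
    (a : X → ℝ → ℝ)
    (ha : Measurable (fun q : X × ℝ => a q.1 q.2))
    (xB : X) (rB : ℝ) (hrB : 0 < rB)
    (hsupp : ∀ (y : X) (t : ℝ), a y t ≠ 0 → 0 < t ∧ dist y xB + t < rB)
    (hatom : (∫⁻ t in Set.Ioi (0 : ℝ), ∫⁻ y,
        ENNReal.ofReal ((a y t) ^ 2) * (∫⁻ z in ball y t, w z ∂μ) /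
          (μ (ball y t) * ENNReal.ofReal t) ∂μ) ^ (1 / 2 : ℝ) ≤
      (∫⁻ z in ball xB rB, w z ∂μ) ^ (1 / 2 - 1 / p))
    [SecondCountableTopology X] [SigmaFinite μ] :
    (∫⁻ x, areaA μ a x ^ p * w x ∂μ) ^ (1 / p) ≤ Cd ^ (1/2 : ℝ) := by
  classical
  have hpne : p ≠ 0 := hp0.ne'
  have hCd0 : Cd ≠ 0 := by
    intro h
    have h1 := hdb xB 1 one_pos
    rw [h, zero_mul, le_zero_iff] at h1
    exact absurd h1 (hpos xB (2*1) (by norm_num)).ne'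
  set B : Set X := ball xB rB with hB_def
  set wB : ℝ≥0∞ := ∫⁻ z in ball xB rB, w z ∂μ with hwB_def
  set K : ℝ≥0∞ := ∫⁻ t in Set.Ioi (0 : ℝ), ∫⁻ y,
        ENNReal.ofReal ((a y t) ^ 2) * (∫⁻ z in ball y t, w z ∂μ) /
          (μ (ball y t) * ENNReal.ofReal t) ∂μ with hK_def
  -- the unsquared area integral
  set I : X → ℝ≥0∞ := fun x => ∫⁻ t in Set.Ioi (0:ℝ), ∫⁻ y in ball x t,
      ENNReal.ofReal ((a y t) ^ 2) / (μ (ball x t) * ENNReal.ofReal t) ∂μ with hI_def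
  have hAreaI : ∀ x, areaA μ a x = I x ^ ((1:ℝ)/2) := fun x => rfl
  -- basic measurability
  have hga : Measurable fun q : X × ℝ => ENNReal.ofReal ((a q.1 q.2) ^ 2) :=
    (ha.pow_const 2).ennreal_ofReal
  have hWm : Measurable fun q : X × ℝ => ∫⁻ z in ball q.1 q.2, w z ∂μ :=
    meas_setLIntegral_ball μ w hw
  have hmb : Measurable fun q : X × ℝ => μ (ball q.1 q.2) := by
    have h := meas_setLIntegral_ball μ (fun _ => 1) measurable_const
    simpa [setLIntegral_one] using h
  -- the product-space kernel
  set Φ : X × (ℝ × X) → ℝ≥0∞ := fun q =>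
    if dist q.1 q.2.2 < q.2.1 then
      ENNReal.ofReal ((a q.2.2 q.2.1) ^ 2) / (μ (ball q.1 q.2.1) * ENNReal.ofReal q.2.1)
    else 0 with hΦ_def
  have hga2 : Measurable fun q : X × ℝ × X => ENNReal.ofReal ((a q.2.2 q.2.1) ^ 2) := by
    have h := hga.comp (show Measurable fun q : X × ℝ × X => (q.2.2, q.2.1) from
      measurable_snd.snd.prodMk measurable_snd.fst)
    simpa [Function.comp_def] using h
  have hmb2 : Measurable fun q : X × ℝ × X => μ (ball q.1 q.2.1) := by
    have h := hmb.comp (show Measurable fun q : X × ℝ × X => (q.1, q.2.1) from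
      measurable_fst.prodMk measurable_snd.fst)
    simpa [Function.comp_def] using h
  have hΦm : Measurable Φ := by
    refine Measurable.ite ?_ ?_ measurable_const
    · exact (isOpen_lt (continuous_fst.dist continuous_snd.snd) continuous_snd.fst).measurableSet
    · exact hga2.div (hmb2.mul (measurable_snd.fst.ennreal_ofReal))
  have hI_eq : ∀ x, I x = ∫⁻ q, Φ (x, q) ∂((volume.restrict (Set.Ioi (0:ℝ))).prod μ) := by
    intro x
    rw [lintegral_prod (fun q => Φ (x, q)) ((hΦm.comp measurable_prodMk_left).aemeasurable)]
    refine lintegral_congr fun t => ?_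
    rw [← lintegral_indicator measurableSet_ball]
    refine lintegral_congr fun y => ?_
    by_cases h : dist x y < t
    · rw [Set.indicator_of_mem (by simpa [mem_ball, dist_comm] using h)]
      simp only [hΦ_def, if_pos h]
    · rw [Set.indicator_of_notMem (by simpa [mem_ball, dist_comm] using h)]
      simp only [hΦ_def, if_neg h]
  have hIm : Measurable I := by
    have : I = fun x => ∫⁻ q, Φ (x, q) ∂((volume.restrict (Set.Ioi (0:ℝ))).prod μ) :=
      funext hI_eq
    rw [this]
    exact Measurable.lintegral_prod_right (f := fun x q => Φ (x, q)) hΦm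
  -- support of I
  have hIsupp : ∀ x, x ∉ B → I x = 0 := by
    intro x hx
    have h0 : ∀ t : ℝ, (∫⁻ y in ball x t,
        ENNReal.ofReal ((a y t) ^ 2) / (μ (ball x t) * ENNReal.ofReal t) ∂μ) = 0 := by
      intro t
      have hz : ∀ y ∈ ball x t,
          ENNReal.ofReal ((a y t) ^ 2) / (μ (ball x t) * ENNReal.ofReal t) = 0 := by
        intro y hy
        have hay : a y t = 0 := by
          by_contra h'
          obtain ⟨ht, hd⟩ := hsupp y t h'
          apply hx
          have h1 : dist y x < t := mem_ball.mp hy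
          have h2 : dist x xB < rB := by
            calc dist x xB ≤ dist x y + dist y xB := dist_triangle _ _ _
              _ < rB := by rw [dist_comm x y]; linarith
          exact mem_ball.mpr h2
        simp [hay]
      calc (∫⁻ y in ball x t,
            ENNReal.ofReal ((a y t) ^ 2) / (μ (ball x t) * ENNReal.ofReal t) ∂μ)
          = ∫⁻ _ in ball x t, 0 ∂μ :=
            setLIntegral_congr_fun measurableSet_ball (fun y hy => hz y hy)
        _ = 0 := lintegral_zero
    rw [hI_def]
    simp only [h0, lintegral_zero]
  -- Fubini: weighted L² bound
  have hψm : Measurable fun q : ℝ × X =>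
      ENNReal.ofReal ((a q.2 q.1) ^ 2) * (∫⁻ z in ball q.2 q.1, w z ∂μ) /
        (μ (ball q.2 q.1) * ENNReal.ofReal q.1) := by
    have hga3 : Measurable fun q : ℝ × X => ENNReal.ofReal ((a q.2 q.1) ^ 2) := by
      have h := hga.comp (show Measurable fun q : ℝ × X => (q.2, q.1) from
        measurable_snd.prodMk measurable_fst)
      simpa [Function.comp_def] using h
    have hWm3 : Measurable fun q : ℝ × X => ∫⁻ z in ball q.2 q.1, w z ∂μ := by
      have h := hWm.comp (show Measurable fun q : ℝ × X => (q.2, q.1) from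
        measurable_snd.prodMk measurable_fst)
      simpa [Function.comp_def] using h
    have hmb3 : Measurable fun q : ℝ × X => μ (ball q.2 q.1) := by
      have h := hmb.comp (show Measurable fun q : ℝ × X => (q.2, q.1) from
        measurable_snd.prodMk measurable_fst)
      simpa [Function.comp_def] using h
    exact (hga3.mul hWm3).div (hmb3.mul measurable_fst.ennreal_ofReal)
  have hJ_eq : (∫⁻ x, I x * w x ∂μ)
      = ∫⁻ q, ∫⁻ x, w x * Φ (x, q) ∂μ ∂((volume.restrict (Set.Ioi (0:ℝ))).prod μ) := by
    have h1 : ∀ x, I x * w x = ∫⁻ q, w x * Φ (x, q)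
        ∂((volume.restrict (Set.Ioi (0:ℝ))).prod μ) := by
      intro x
      rw [lintegral_const_mul (w x) (f := fun q => Φ (x, q)) (hΦm.comp measurable_prodMk_left), ← hI_eq x, mul_comm]
    calc (∫⁻ x, I x * w x ∂μ)
        = ∫⁻ x, ∫⁻ q, w x * Φ (x, q) ∂((volume.restrict (Set.Ioi (0:ℝ))).prod μ) ∂μ :=
          lintegral_congr h1
      _ = ∫⁻ q, ∫⁻ x, w x * Φ (x, q) ∂μ ∂((volume.restrict (Set.Ioi (0:ℝ))).prod μ) :=
          lintegral_lintegral_swap ((hw.comp measurable_fst).mul hΦm).aemeasurable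
  have hae : ∀ᵐ q ∂((volume.restrict (Set.Ioi (0:ℝ))).prod μ), 0 < q.1 := by
    rw [ae_iff]
    have hset : {q : ℝ × X | ¬ 0 < q.1} = {t : ℝ | ¬ 0 < t} ×ˢ Set.univ := by
      ext q; simp [Set.mem_prod]
    rw [hset, Measure.prod_prod]
    have h2 : (volume.restrict (Set.Ioi (0:ℝ))) {t : ℝ | ¬ 0 < t} = 0 := by
      have hms : MeasurableSet {t : ℝ | ¬ 0 < t} := by
        have he2 : {t : ℝ | ¬ 0 < t} = Set.Iic 0 := by ext t; simp [not_lt]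
        rw [he2]; exact measurableSet_Iic
      rw [Measure.restrict_apply hms]
      have he : {t : ℝ | ¬ 0 < t} ∩ Set.Ioi 0 = ∅ := by
        ext t
        simp only [Set.mem_inter_iff, Set.mem_setOf_eq, Set.mem_Ioi,
          Set.mem_empty_iff_false, iff_false, not_and]
        exact fun h => h
      rw [he, measure_empty]
    rw [h2, zero_mul]
  have hpoint : ∀ t : ℝ, 0 < t → ∀ y : X,
      (∫⁻ x, w x * Φ (x, (t, y)) ∂μ) ≤
        Cd * (ENNReal.ofReal ((a y t) ^ 2) * (∫⁻ z in ball y t, w z ∂μ) /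
          (μ (ball y t) * ENNReal.ofReal t)) := by
    intro t ht y
    have hx_eq : (fun x => w x * Φ (x, (t, y))) = (ball y t).indicator
        (fun x => w x * (ENNReal.ofReal ((a y t) ^ 2) /
          (μ (ball x t) * ENNReal.ofReal t))) := by
      funext x
      by_cases h : dist x y < t
      · rw [Set.indicator_of_mem (mem_ball.mpr h)]
        simp only [hΦ_def, if_pos h]
      · rw [Set.indicator_of_notMem (fun hc => h (mem_ball.mp hc))]
        simp only [hΦ_def, if_neg h, mul_zero]
    rw [hx_eq, lintegral_indicator measurableSet_ball]
    have hbound : ∀ x ∈ ball y t,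
        w x * (ENNReal.ofReal ((a y t) ^ 2) / (μ (ball x t) * ENNReal.ofReal t)) ≤
        (Cd * (ENNReal.ofReal ((a y t) ^ 2) / (μ (ball y t) * ENNReal.ofReal t))) * w x := by
      intro x hx
      have hsub : ball y t ⊆ ball x (2 * t) := by
        intro z hz
        rw [mem_ball] at *
        calc dist z x ≤ dist z y + dist y x := dist_triangle _ _ _
          _ < t + t := by rw [dist_comm y x] at *; rw [dist_comm z y] at *; linarith [dist_comm x y ▸ hx]
          _ = 2 * t := by ring
      have hmono : μ (ball y t) ≤ Cd * μ (ball x t) :=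
        (measure_mono hsub).trans (hdb x t ht)
      have h1 : (Cd * μ (ball x t))⁻¹ ≤ (μ (ball y t))⁻¹ := ENNReal.inv_le_inv' hmono
      have h2 : (μ (ball x t))⁻¹ = Cd * (Cd * μ (ball x t))⁻¹ := by
        rw [ENNReal.mul_inv (Or.inl hCd0) (Or.inl hCd.ne), ← mul_assoc,
          ENNReal.mul_inv_cancel hCd0 hCd.ne, one_mul]
      have hinv : (μ (ball x t))⁻¹ ≤ Cd * (μ (ball y t))⁻¹ :=
        h2 ▸ mul_le_mul_right h1 Cd
      have key : ENNReal.ofReal ((a y t) ^ 2) / (μ (ball x t) * ENNReal.ofReal t) ≤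
          Cd * (ENNReal.ofReal ((a y t) ^ 2) / (μ (ball y t) * ENNReal.ofReal t)) := by
        rw [div_eq_mul_inv, div_eq_mul_inv,
          ENNReal.mul_inv (Or.inl (hpos x t ht).ne') (Or.inl (hfin x t ht).ne),
          ENNReal.mul_inv (Or.inl (hpos y t ht).ne') (Or.inl (hfin y t ht).ne)]
        calc ENNReal.ofReal ((a y t) ^ 2) * ((μ (ball x t))⁻¹ * (ENNReal.ofReal t)⁻¹)
            ≤ ENNReal.ofReal ((a y t) ^ 2) * ((Cd * (μ (ball y t))⁻¹) * (ENNReal.ofReal t)⁻¹) := by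
              exact mul_le_mul_right (mul_le_mul_left hinv _) _
          _ = Cd * (ENNReal.ofReal ((a y t) ^ 2) * ((μ (ball y t))⁻¹ * (ENNReal.ofReal t)⁻¹)) := by
              ring
      calc w x * (ENNReal.ofReal ((a y t) ^ 2) / (μ (ball x t) * ENNReal.ofReal t))
          ≤ w x * (Cd * (ENNReal.ofReal ((a y t) ^ 2) /
              (μ (ball y t) * ENNReal.ofReal t))) := mul_le_mul_right key _
        _ = (Cd * (ENNReal.ofReal ((a y t) ^ 2) /
              (μ (ball y t) * ENNReal.ofReal t))) * w x := mul_comm _ _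
    calc (∫⁻ x in ball y t,
          w x * (ENNReal.ofReal ((a y t) ^ 2) / (μ (ball x t) * ENNReal.ofReal t)) ∂μ)
        ≤ ∫⁻ x in ball y t,
            (Cd * (ENNReal.ofReal ((a y t) ^ 2) / (μ (ball y t) * ENNReal.ofReal t))) * w x ∂μ :=
          setLIntegral_mono' measurableSet_ball hbound
      _ = (Cd * (ENNReal.ofReal ((a y t) ^ 2) / (μ (ball y t) * ENNReal.ofReal t))) *
            ∫⁻ x in ball y t, w x ∂μ := lintegral_const_mul _ hw
      _ = Cd * (ENNReal.ofReal ((a y t) ^ 2) * (∫⁻ z in ball y t, w z ∂μ) /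
            (μ (ball y t) * ENNReal.ofReal t)) := by
          simp only [div_eq_mul_inv]; ring
  have hJK : (∫⁻ x, I x * w x ∂μ) ≤ Cd * K := by
    rw [hJ_eq]
    have hstep : (∫⁻ q, ∫⁻ x, w x * Φ (x, q) ∂μ
        ∂((volume.restrict (Set.Ioi (0:ℝ))).prod μ)) ≤
        ∫⁻ q, Cd * (ENNReal.ofReal ((a q.2 q.1) ^ 2) * (∫⁻ z in ball q.2 q.1, w z ∂μ) /
          (μ (ball q.2 q.1) * ENNReal.ofReal q.1))
          ∂((volume.restrict (Set.Ioi (0:ℝ))).prod μ) :=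
      lintegral_mono_ae (hae.mono fun q hq => hpoint q.1 hq q.2)
    refine hstep.trans (le_of_eq ?_)
    rw [lintegral_const_mul _ hψm]
    congr 1
    rw [lintegral_prod _ hψm.aemeasurable]
  have hK : K ≤ wB ^ (1 - 2/p : ℝ) := by
    calc K = (K ^ ((1:ℝ)/2)) ^ (2:ℝ) := by
          rw [← ENNReal.rpow_mul]; norm_num
      _ ≤ (wB ^ ((1:ℝ)/2 - 1/p)) ^ (2:ℝ) := ENNReal.rpow_le_rpow hatom (by norm_num)
      _ = wB ^ (1 - 2/p : ℝ) := by rw [← ENNReal.rpow_mul]; congr 1; ring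
  -- Hölder
  have hconj : Real.HolderConjugate (2/p) (2/(2-p)) := by
    rw [Real.holderConjugate_iff]
    constructor
    · rw [lt_div_iff₀ hp0]; linarith
    · rw [inv_div, inv_div]; ring
  have hsplit : ∀ x : X, (I x * w x) ^ (p/2 : ℝ) * w x ^ (1 - p/2 : ℝ)
      = I x ^ (p/2 : ℝ) * w x := by
    intro x
    rw [ENNReal.mul_rpow_of_nonneg _ _ (by linarith : (0:ℝ) ≤ p/2), mul_assoc,
      ← ENNReal.rpow_add_of_nonneg _ _ (by linarith : (0:ℝ) ≤ p/2) (by linarith : (0:ℝ) ≤ 1 - p/2)]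
    have h : p/2 + (1 - p/2) = (1:ℝ) := by ring
    rw [h, ENNReal.rpow_one]
  have hHolder : (∫⁻ x in B, I x ^ (p/2:ℝ) * w x ∂μ) ≤
      (∫⁻ x in B, I x * w x ∂μ) ^ (p/2:ℝ) * wB ^ ((2-p)/2 : ℝ) := by
    have hf : AEMeasurable (fun x => (I x * w x) ^ (p/2:ℝ)) (μ.restrict B) :=
      ((hIm.mul hw).pow measurable_const).aemeasurable
    have hg : AEMeasurable (fun x => w x ^ (1 - p/2 : ℝ)) (μ.restrict B) :=
      (hw.pow measurable_const).aemeasurable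
    have hH := ENNReal.lintegral_mul_le_Lp_mul_Lq (μ.restrict B) hconj hf hg
    have e1 : (∫⁻ x in B, ((fun x => (I x * w x) ^ (p/2:ℝ)) *
        (fun x => w x ^ (1 - p/2 : ℝ))) x ∂μ) = ∫⁻ x in B, I x ^ (p/2:ℝ) * w x ∂μ :=
      lintegral_congr fun x => by simp only [Pi.mul_apply]; rw [hsplit]
    have e2 : (∫⁻ x in B, ((I x * w x) ^ (p/2:ℝ)) ^ (2/p:ℝ) ∂μ) ^ (1/(2/p):ℝ)
        = (∫⁻ x in B, I x * w x ∂μ) ^ (p/2:ℝ) := by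
      have h1 : ∀ x : X, ((I x * w x) ^ (p/2:ℝ)) ^ (2/p:ℝ) = I x * w x := by
        intro x
        rw [← ENNReal.rpow_mul]
        have : (p/2) * (2/p) = (1:ℝ) := by field_simp
        rw [this, ENNReal.rpow_one]
      have h2 : (1/(2/p) : ℝ) = p/2 := by rw [one_div, inv_div]
      rw [h2]
      congr 1
      exact lintegral_congr fun x => h1 x
    have e3 : (∫⁻ x in B, (w x ^ (1 - p/2 : ℝ)) ^ (2/(2-p):ℝ) ∂μ) ^ (1/(2/(2-p)):ℝ)
        = wB ^ ((2-p)/2 : ℝ) := by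
      have h1 : ∀ x : X, (w x ^ (1 - p/2 : ℝ)) ^ (2/(2-p):ℝ) = w x := by
        intro x
        rw [← ENNReal.rpow_mul]
        have h2p : (2:ℝ) - p ≠ 0 := by linarith
        have : (1 - p/2) * (2/(2-p)) = (1:ℝ) := by
          field_simp
        rw [this, ENNReal.rpow_one]
      have h2 : (1/(2/(2-p)) : ℝ) = (2-p)/2 := by rw [one_div, inv_div]
      rw [h2]
      congr 1
      exact lintegral_congr fun x => h1 x
    rw [← e1, ← e2, ← e3]
    exact hH
  -- support reduction
  have hsplit_int : (∫⁻ x, I x ^ (p/2:ℝ) * w x ∂μ) = ∫⁻ x in B, I x ^ (p/2:ℝ) * w x ∂μ := by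
    rw [← lintegral_indicator (measurableSet_ball : MeasurableSet B)]
    refine lintegral_congr fun x => ?_
    by_cases hx : x ∈ B
    · rw [Set.indicator_of_mem hx]
    · rw [Set.indicator_of_notMem hx, hIsupp x hx,
        ENNReal.zero_rpow_of_pos (half_pos hp0), zero_mul]
  -- main estimate
  have hmain : (∫⁻ x, areaA μ a x ^ p * w x ∂μ) ≤ Cd ^ (p/2 : ℝ) := by
    have e1 : (∫⁻ x, areaA μ a x ^ p * w x ∂μ) = ∫⁻ x, I x ^ (p/2:ℝ) * w x ∂μ := by
      refine lintegral_congr fun x => ?_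
      rw [hAreaI x, ← ENNReal.rpow_mul]
      congr 2
      ring
    rw [e1, hsplit_int]
    refine hHolder.trans ?_
    have hres : (∫⁻ x in B, I x * w x ∂μ) ≤ Cd * wB ^ (1 - 2/p : ℝ) :=
      ((setLIntegral_le_lintegral _ _).trans hJK).trans (mul_le_mul_right hK Cd)
    by_cases hwB0 : wB = 0
    · have hz : wB ^ ((2-p)/2 : ℝ) = 0 := by
        rw [hwB0]; exact ENNReal.zero_rpow_of_pos (by linarith)
      rw [hz, mul_zero]
      exact zero_le
    · have hwBfin : wB ≠ ⊤ := (hwloc xB rB hrB).ne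
      calc (∫⁻ x in B, I x * w x ∂μ) ^ (p/2:ℝ) * wB ^ ((2-p)/2:ℝ)
          ≤ (Cd * wB ^ (1 - 2/p : ℝ)) ^ (p/2:ℝ) * wB ^ ((2-p)/2:ℝ) :=
            mul_le_mul_left (ENNReal.rpow_le_rpow hres (by linarith)) _
        _ = Cd ^ (p/2:ℝ) * (wB ^ ((1 - 2/p) * (p/2) : ℝ) * wB ^ ((2-p)/2:ℝ)) := by
            rw [ENNReal.mul_rpow_of_nonneg _ _ (by linarith : (0:ℝ) ≤ p/2),
              ← ENNReal.rpow_mul, mul_assoc]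
        _ = Cd ^ (p/2:ℝ) * wB ^ ((1 - 2/p) * (p/2) + (2-p)/2 : ℝ) := by
            rw [← ENNReal.rpow_add _ _ hwB0 hwBfin]
        _ = Cd ^ (p/2:ℝ) := by
            have hz : ((1 - 2/p) * (p/2) + (2-p)/2 : ℝ) = 0 := by
              field_simp
              ring
            rw [hz, ENNReal.rpow_zero, mul_one]
  calc (∫⁻ x, areaA μ a x ^ p * w x ∂μ) ^ (1/p)
      ≤ (Cd ^ (p/2 : ℝ)) ^ (1/p : ℝ) := ENNReal.rpow_le_rpow hmain (by positivity)
    _ = Cd ^ (1/2 : ℝ) := by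
        rw [← ENNReal.rpow_mul]
        congr 1
        field_simp

/-- on a space of homogeneous type with `μ(X) = ∞`, for `0 < p ≤ 1` and
`w ∈ A_1 ∩ RH_{2/(2-p)}`, there is a constant `C` such that every `T_w^p`-atom `a`
satisfies `‖a‖_{T_w^p} = ‖𝒜(a)‖_{L_w^p} ≤ C`; in particular every atom lies in `T_w^p(X)`. -/
theorem statement10
    {X : Type*} [MetricSpace X] [MeasurableSpace X] [BorelSpace X]
    (μ : Measure X)
    (Cd : ℝ≥0∞) (hCd : Cd < ⊤)
    (hdb : ∀ (x : X) (r : ℝ), 0 < r → μ (ball x (2 * r)) ≤ Cd * μ (ball x r))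
    (hpos : ∀ (x : X) (r : ℝ), 0 < r → 0 < μ (ball x r))
    (hfin : ∀ (x : X) (r : ℝ), 0 < r → μ (ball x r) < ⊤)
    (hμinf : μ Set.univ = ⊤)
    (w : X → ℝ≥0∞) (hw : Measurable w)
    (hwloc : ∀ (x : X) (r : ℝ), 0 < r → ∫⁻ y in ball x r, w y ∂μ < ⊤)
    (p : ℝ) (hp0 : 0 < p) (hp1 : p ≤ 1)
    (hA1 : IsA1 μ w) (hRH : IsRH μ w (2 / (2 - p))) :
    ∃ C : ℝ≥0∞, C < ⊤ ∧ ∀ a : X → ℝ → ℝ, IsTentAtom μ w p a →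
      tentNorm μ w p a ≤ C := by
  refine ⟨Cd ^ (1/2 : ℝ), ENNReal.rpow_lt_top_of_nonneg (by norm_num) hCd.ne, ?_⟩
  rintro a ⟨ha, xB, rB, hrB, hsupp, hatom⟩
  haveI hsc : SecondCountableTopology X := secondCountable_of_doubling μ Cd hCd hdb hpos hfin xB
  haveI hsf : SigmaFinite μ := by
    refine ⟨⟨⟨fun n => ball xB (n+1), fun _ => trivial,
      fun n => hfin xB (n+1) (by positivity), ?_⟩⟩⟩
    ext z
    simp only [Set.mem_iUnion, mem_ball, Set.mem_univ, iff_true]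
    obtain ⟨n, hn⟩ := exists_nat_gt (dist z xB)
    exact ⟨n, by linarith [hn]⟩
  exact tentAtom_bound μ Cd hCd hdb hpos hfin hμinf w hw hwloc p hp0 hp1
    a ha xB rB hrB hsupp hatom
end
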